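/- Let c₁, c₂ > 0, m : ℝ → ℝ³ and s : ℝ → ℝ be continuous, and let v, β : ℝ → ℝ³ be differentiable with (d/dt)v(t) = v(t) × m(t) − (1/2) s(t) β(t) − c₁ v(t) and (d/dt)β(t) = c₂ s(t) v(t) for all t. Then the Lyapunov function V(t) = ‖v(t)‖² + (1/(2c₂)) ‖β(t)‖² satisfies (d/dt)V(t) = −2 c₁ ‖v(t)‖² for all t; in particular V is nonincreasing, so v and β remain bounded for all time. -/

import Mathlib

open Filter Real Topology

noncomputable section

/-- ℝ³ with the Euclidean norm. -/
abbrev E3 := EuclideanSpace ℝ (Fin 3)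

/-- Cross product on ℝ³. -/
def cross (u v : E3) : E3 :=
  WithLp.toLp 2 ![u 1 * v 2 - u 2 * v 1, u 2 * v 0 - u 0 * v 2, u 0 * v 1 - u 1 * v 0]

/-- The quaternion with real (scalar) part `a` and vector (imaginary) part `v`. -/
def quat (a : ℝ) (v : E3) : Quaternion ℝ := ⟨a, v 0, v 1, v 2⟩

/-- The vector (imaginary) part of a quaternion, as an element of ℝ³. -/
def qvec (q : Quaternion ℝ) : E3 := WithLp.toLp 2 ![q.imI, q.imJ, q.imK]

/-! The cross term `v × m` is orthogonal to `v`, so it does no work on `‖v‖²`; the coupling terms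
`-(s/2)⟪v, β⟫` and `(1/(2c₂))⟪β, c₂ s v⟫` cancel by the choice of weight `1/(2c₂)`. What is left
of `V̇` is the damping `-2c₁‖v‖²`, so `V` is nonincreasing and bounds both `‖v‖²` and `‖β‖²`. -/

lemma inner_self_cross (u w : E3) : inner ℝ u (cross u w) = 0 := by
  simp only [PiLp.inner_apply, RCLike.inner_apply, conj_trivial, Fin.sum_univ_three, cross,
    Matrix.cons_val_zero, Matrix.cons_val_one, Matrix.cons_val_two,
    Matrix.head_cons, Matrix.tail_cons]
  ring

lemma hasDerivAt_lyapunov_of_inner_eq_zero {F : Type*} [NormedAddCommGroup F]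
    [InnerProductSpace ℝ F] {c₁ c₂ : ℝ} (hc₂ : c₂ ≠ 0) {v β : ℝ → F}
    {w : F} {σ t : ℝ} (hw : inner ℝ (v t) w = 0)
    (hv : HasDerivAt v (w - (σ / 2) • β t - c₁ • v t) t)
    (hβ : HasDerivAt β ((c₂ * σ) • v t) t) :
    HasDerivAt (fun τ => ‖v τ‖ ^ 2 + (1 / (2 * c₂)) * ‖β τ‖ ^ 2) (-2 * c₁ * ‖v t‖ ^ 2) t := by
  refine (hv.norm_sq.fun_add (hβ.norm_sq.const_mul (1 / (2 * c₂)))).congr_deriv ?_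
  simp only [inner_sub_right, inner_smul_right, hw, real_inner_self_eq_norm_sq,
    real_inner_comm (v t) (β t)]
  field_simp
  ring

lemma exists_bound_of_antitone_norm_sq_add {F : Type*} [SeminormedAddCommGroup F] {k : ℝ}
    (hk : 0 < k) {x y : ℝ → F}
    (hV : Antitone (fun τ => ‖x τ‖ ^ 2 + k * ‖y τ‖ ^ 2)) :
    ∃ C, ∀ t, 0 ≤ t → ‖x t‖ ≤ C ∧ ‖y t‖ ≤ C := by
  set V₀ := ‖x 0‖ ^ 2 + k * ‖y 0‖ ^ 2
  refine ⟨max √V₀ √(V₀ / k), fun t ht => ?_⟩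
  have hVt : ‖x t‖ ^ 2 + k * ‖y t‖ ^ 2 ≤ V₀ := hV ht
  have hx : ‖x t‖ ^ 2 ≤ V₀ := by nlinarith [sq_nonneg ‖y t‖]
  have hy : ‖y t‖ ^ 2 ≤ V₀ / k := by
    rw [le_div_iff₀ hk]
    nlinarith [sq_nonneg ‖x t‖]
  constructor
  · exact le_max_of_le_left ((Real.le_sqrt (norm_nonneg _) (by positivity)).2 hx)
  · exact le_max_of_le_right ((Real.le_sqrt (norm_nonneg _) (by positivity)).2 hy)

theorem stmt_16_general (c₁ c₂ : ℝ) (hc₁ : 0 < c₁) (hc₂ : 0 < c₂)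
    (m : ℝ → E3) (s : ℝ → ℝ)
    (v β : ℝ → E3)
    (hv : ∀ t, HasDerivAt v (cross (v t) (m t) - (s t / 2) • β t - c₁ • v t) t)
    (hβ : ∀ t, HasDerivAt β ((c₂ * s t) • v t) t) :
    (∀ t, HasDerivAt (fun τ => ‖v τ‖ ^ 2 + (1 / (2 * c₂)) * ‖β τ‖ ^ 2)
        (-2 * c₁ * ‖v t‖ ^ 2) t) ∧
    Antitone (fun τ => ‖v τ‖ ^ 2 + (1 / (2 * c₂)) * ‖β τ‖ ^ 2) ∧
    ∃ C, ∀ t, 0 ≤ t → ‖v t‖ ≤ C ∧ ‖β t‖ ≤ C := by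
  have hderiv : ∀ t, HasDerivAt (fun τ => ‖v τ‖ ^ 2 + (1 / (2 * c₂)) * ‖β τ‖ ^ 2)
      (-2 * c₁ * ‖v t‖ ^ 2) t := fun t =>
    hasDerivAt_lyapunov_of_inner_eq_zero hc₂.ne' (inner_self_cross _ _) (hv t) (hβ t)
  have hanti : Antitone (fun τ => ‖v τ‖ ^ 2 + (1 / (2 * c₂)) * ‖β τ‖ ^ 2) :=
    antitone_of_hasDerivAt_nonpos (f' := fun t => -2 * c₁ * ‖v t‖ ^ 2) hderiv fun t =>
      mul_nonpos_of_nonpos_of_nonneg (by linarith : -2 * c₁ ≤ 0) (sq_nonneg ‖v t‖)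
  exact ⟨hderiv, hanti, exists_bound_of_antitone_norm_sq_add (by positivity) hanti⟩

/-- Along the orientation-observer error dynamics
`v̇ = v × m(t) − (1/2) s(t) β(t) − c₁ v`, `β̇ = c₂ s(t) v`, the Lyapunov function
`V(t) = ‖v(t)‖² + (1/(2c₂))‖β(t)‖²` satisfies `V̇(t) = −2c₁‖v(t)‖²`; in particular `V` is
nonincreasing, so `v` and `β` remain bounded for all (forward) time. -/
theorem stmt_16 (c₁ c₂ : ℝ) (hc₁ : 0 < c₁) (hc₂ : 0 < c₂)
    (m : ℝ → E3) (s : ℝ → ℝ) (hm : Continuous m) (hs : Continuous s)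
    (v β : ℝ → E3)
    (hv : ∀ t, HasDerivAt v (cross (v t) (m t) - (s t / 2) • β t - c₁ • v t) t)
    (hβ : ∀ t, HasDerivAt β ((c₂ * s t) • v t) t) :
    (∀ t, HasDerivAt (fun τ => ‖v τ‖ ^ 2 + (1 / (2 * c₂)) * ‖β τ‖ ^ 2)
        (-2 * c₁ * ‖v t‖ ^ 2) t) ∧
    Antitone (fun τ => ‖v τ‖ ^ 2 + (1 / (2 * c₂)) * ‖β τ‖ ^ 2) ∧
    ∃ C, ∀ t, 0 ≤ t → ‖v t‖ ≤ C ∧ ‖β t‖ ≤ C :=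
  stmt_16_general c₁ c₂ hc₁ hc₂ m s v β hv hβ
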